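/- The circulant graph C_7(1,3) has no total 5-colouring; that is, there is no map σ from the vertices and edges of C_7(1,3) to {1,2,3,4,5} such that adjacent vertices receive distinct colours, adjacent edges receive distinct colours, and every vertex receives a colour distinct from those of its incident edges. -/

import Mathlib

/-- The circulant graph `C_n(1,3)`: vertices are `ZMod n`, and `i` is adjacent to `j`
iff `i - j ≡ ±1` or `±3 (mod n)`. -/
def circulantGraph (n : ℕ) : SimpleGraph (ZMod n) :=
  SimpleGraph.fromRel (fun i j => j - i = 1 ∨ j - i = 3)

/-- `vc` (on vertices) and `ec` (on edges) form a total `k`-colouring of `G`: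
adjacent vertices get distinct colours, adjacent (distinct, incident) edges get distinct
colours, and each vertex gets a colour distinct from those of its incident edges. -/
def IsTotalColoring {V : Type*} (G : SimpleGraph V) (k : ℕ)
    (vc : V → Fin k) (ec : Sym2 V → Fin k) : Prop :=
  (∀ v w : V, G.Adj v w → vc v ≠ vc w) ∧
  (∀ e₁ ∈ G.edgeSet, ∀ e₂ ∈ G.edgeSet, e₁ ≠ e₂ → (∃ v, v ∈ e₁ ∧ v ∈ e₂) → ec e₁ ≠ ec e₂) ∧
  (∀ v : V, ∀ e ∈ G.edgeSet, v ∈ e → vc v ≠ ec e)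

/-- `G` has a total `k`-colouring. -/
def HasTotalColoring {V : Type*} (G : SimpleGraph V) (k : ℕ) : Prop :=
  ∃ vc ec, IsTotalColoring G k vc ec

/-- The total chromatic number of `G`: the least `k` admitting a total `k`-colouring. -/
noncomputable def totalChromaticNumber {V : Type*} (G : SimpleGraph V) : ℕ :=
  sInf {k : ℕ | HasTotalColoring G k}

/-!
Each colour class of a total colouring is an independent set of vertices together with a matching
whose edges avoid those vertices, so it has at most `⌊(|V| + α(G)) / 2⌋` elements. For `C_7(1,3)`
this is `⌊(7 + 2) / 2⌋ = 4`, so five classes cover at most `20` of the `7 + 14 = 21` vertices and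
edges.
-/

instance (n : ℕ) : DecidableRel (circulantGraph n).Adj := fun _ _ =>
  decidable_of_iff' _ (SimpleGraph.fromRel_adj _ _ _)

open Finset SimpleGraph

namespace IsTotalColoring

variable {V : Type*} [Fintype V] {G : SimpleGraph V} {k : ℕ} {vc : V → Fin k} {ec : Sym2 V → Fin k}

theorem card_vertexClass_le_indepNum (h : IsTotalColoring G k vc ec) (c : Fin k) :
    #{v | vc v = c} ≤ G.indepNum := by
  refine IsIndepSet.card_le_indepNum fun v hv w hw hvw hadj => h.1 v w hadj ?_
  simp only [coe_filter, mem_univ, true_and, Set.mem_ofPred_eq] at hv hw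
  rw [hv, hw]

/-- The edges of one colour form a matching avoiding the vertices of that colour. -/
theorem card_vertexClass_add_two_mul_card_edgeClass_le [DecidableEq V] [DecidableRel G.Adj]
    (h : IsTotalColoring G k vc ec) (c : Fin k) :
    #{v | vc v = c} + 2 * #{e ∈ G.edgeFinset | ec e = c} ≤ Fintype.card V := by
  set Ec := ({e ∈ G.edgeFinset | ec e = c} : Finset (Sym2 V))
  have hEc : ∀ e ∈ Ec, e ∈ G.edgeSet ∧ ec e = c := by simp [Ec]
  have hdisj : (Ec : Set (Sym2 V)).PairwiseDisjoint Sym2.toFinset := by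
    intro e₁ h₁ e₂ h₂ hne
    obtain ⟨h₁, hc₁⟩ := hEc e₁ h₁
    obtain ⟨h₂, hc₂⟩ := hEc e₂ h₂
    refine Finset.disjoint_left.2 fun v hv₁ hv₂ => ?_
    exact h.2.1 e₁ h₁ e₂ h₂ hne ⟨v, Sym2.mem_toFinset.1 hv₁, Sym2.mem_toFinset.1 hv₂⟩
      (hc₁.trans hc₂.symm)
  have hcard : #(Ec.biUnion Sym2.toFinset) = 2 * #Ec := by
    rw [card_biUnion hdisj, sum_const_nat fun e he =>
      Sym2.card_toFinset_of_not_isDiag e (not_isDiag_of_mem_edgeSet G (hEc e he).1), mul_comm]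
  have hVE : Disjoint ({v | vc v = c} : Finset V) (Ec.biUnion Sym2.toFinset) := by
    refine Finset.disjoint_left.2 fun v hv hvE => ?_
    obtain ⟨e, he, hve⟩ := mem_biUnion.1 hvE
    obtain ⟨heG, hc⟩ := hEc e he
    exact h.2.2 v e heG (Sym2.mem_toFinset.1 hve) ((mem_filter.1 hv).2.trans hc.symm)
  rw [← hcard, ← card_union_of_disjoint hVE]
  exact card_le_univ _

end IsTotalColoring

theorem SimpleGraph.IndepSetFree.indepNum_lt {V : Type*} {G : SimpleGraph V} {n : ℕ} (h : G.IndepSetFree n) :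
    G.indepNum < n := by
  obtain ⟨s, hs⟩ := G.exists_isNIndepSet_indepNum
  by_contra! hn
  obtain ⟨t, hts, ht⟩ := exists_subset_card_eq (hs.card_eq ▸ hn)
  exact h t ⟨hs.isIndepSet.mono (by exact_mod_cast hts), ht⟩

theorem HasTotalColoring.card_add_card_edgeFinset_le {V : Type*} [Fintype V] [DecidableEq V]
    {G : SimpleGraph V} [DecidableRel G.Adj] {k : ℕ} (h : HasTotalColoring G k) :
    Fintype.card V + #G.edgeFinset ≤ k * ((Fintype.card V + G.indepNum) / 2) := by
  obtain ⟨vc, ec, h⟩ := h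
  have hclass (c : Fin k) :
      #{v | vc v = c} + #{e ∈ G.edgeFinset | ec e = c} ≤ (Fintype.card V + G.indepNum) / 2 := by
    have := h.card_vertexClass_le_indepNum c
    have := h.card_vertexClass_add_two_mul_card_edgeClass_le c
    omega
  calc Fintype.card V + #G.edgeFinset
      = ∑ c : Fin k, (#{v | vc v = c} + #{e ∈ G.edgeFinset | ec e = c}) := by
        rw [sum_add_distrib, ← card_univ, card_eq_sum_card_fiberwise fun v _ => mem_univ (vc v),
          card_eq_sum_card_fiberwise fun e _ => mem_univ (ec e)]
    _ ≤ ∑ _c : Fin k, (Fintype.card V + G.indepNum) / 2 := sum_le_sum fun c _ => hclass c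
    _ = k * ((Fintype.card V + G.indepNum) / 2) := by simp

theorem card_edgeFinset_circulantGraph_seven : #(circulantGraph 7).edgeFinset = 14 := by
  decide

theorem indepSetFree_circulantGraph_seven_three : (circulantGraph 7).IndepSetFree 3 := by
  rintro t ⟨ht, hcard⟩
  obtain ⟨a, b, c, hab, hac, hbc, rfl⟩ := card_eq_three.1 hcard
  have hpair : ∀ a b c : ZMod 7, a ≠ b → a ≠ c → b ≠ c →
      (circulantGraph 7).Adj a b ∨ (circulantGraph 7).Adj a c ∨ (circulantGraph 7).Adj b c := by
    decide
  rcases hpair a b c hab hac hbc with hadj | hadj | hadj <;>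
    exact ht (by simp) (by simp) hadj.ne hadj

theorem no_total_5_coloring_circulant_7 :
    ¬ HasTotalColoring (circulantGraph 7) 5 := fun h => by
  have hcount := h.card_add_card_edgeFinset_le
  rw [ZMod.card, card_edgeFinset_circulantGraph_seven] at hcount
  have := indepSetFree_circulantGraph_seven_three.indepNum_lt
  omega
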